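/- Let A ∈ ℝ^{n×m} and let B be a k×k submatrix of A with row indices I and column indices J. Suppose B has a unique fully supported Nash equilibrium (x*, y*) (extended by zeros to distributions on [n] and [m]). If (k = n or max over i ∉ I of Σ_{j∈J} A_{i,j} y*_j < V*_B) and (k = m or min over j ∉ J of Σ_{i∈I} A_{i,j} x*_i > V*_B), then (x*, y*) is the unique Nash equilibrium of the game on A. -/

import Mathlib

open Finset

/-- Expected payoff of the row player. -/
def gamePayoff {n m : ℕ} (A : Matrix (Fin n) (Fin m) ℝ)
    (x : Fin n → ℝ) (y : Fin m → ℝ) : ℝ :=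
  ∑ i, ∑ j, x i * A i j * y j

/-- `(x, y)` is a Nash equilibrium of the zero-sum matrix game on `A`. -/
def IsNash {n m : ℕ} (A : Matrix (Fin n) (Fin m) ℝ)
    (x : Fin n → ℝ) (y : Fin m → ℝ) : Prop :=
  x ∈ stdSimplex ℝ (Fin n) ∧ y ∈ stdSimplex ℝ (Fin m) ∧
    (∀ z ∈ stdSimplex ℝ (Fin n), gamePayoff A z y ≤ gamePayoff A x y) ∧
    (∀ w ∈ stdSimplex ℝ (Fin m), gamePayoff A x w ≥ gamePayoff A x y)

/-- `(x, y)` is a Nash equilibrium of the subgame of `A` restricted to the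
rows `I` and columns `J`. -/
def IsNashOn {n m : ℕ} (A : Matrix (Fin n) (Fin m) ℝ) (I : Finset (Fin n))
    (J : Finset (Fin m)) (x : Fin n → ℝ) (y : Fin m → ℝ) : Prop :=
  x ∈ stdSimplex ℝ (Fin n) ∧ y ∈ stdSimplex ℝ (Fin m) ∧
    (∀ i ∉ I, x i = 0) ∧ (∀ j ∉ J, y j = 0) ∧
    (∀ z ∈ stdSimplex ℝ (Fin n), (∀ i ∉ I, z i = 0) →
      gamePayoff A z y ≤ gamePayoff A x y) ∧
    (∀ w ∈ stdSimplex ℝ (Fin m), (∀ j ∉ J, w j = 0) →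
      gamePayoff A x w ≥ gamePayoff A x y)

/-!
Every row outside `I` earns strictly less than the value against `y'` and every column outside `J`
strictly more against `x'`, so no pure deviation pays and `(x', y')` is an equilibrium of the whole
game. Equilibria of a zero-sum game are interchangeable, so in any equilibrium `(x, y)` the
strategy `x` is a best reply to `y'` and `y` one to `x'`. A best reply puts no weight on strictly
worse pure strategies, hence `(x, y)` is supported on `I × J`, is an equilibrium of the subgame,
and equals `(x', y')` by uniqueness there.
-/

open Matrix

section Simplex

variable {ι : Type*} [Fintype ι] {z r : ι → ℝ} {V : ℝ}

lemma dotProduct_le_of_mem_stdSimplex (hz : z ∈ stdSimplex ℝ ι) (hr : ∀ i, r i ≤ V) :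
    z ⬝ᵥ r ≤ V :=
  calc z ⬝ᵥ r ≤ ∑ i, z i * V := sum_le_sum fun i _ => mul_le_mul_of_nonneg_left (hr i) (hz.1 i)
    _ = V := by rw [← sum_mul, hz.2, one_mul]

lemma eq_zero_of_dotProduct_eq_of_lt (hz : z ∈ stdSimplex ℝ ι) (hr : ∀ i, r i ≤ V)
    (heq : z ⬝ᵥ r = V) {i : ι} (hi : r i < V) : z i = 0 := by
  have hsum : ∑ k, z k * (V - r k) = 0 := by
    simp only [mul_sub, sum_sub_distrib, ← sum_mul, hz.2, one_mul]
    exact sub_eq_zero.2 heq.symm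
  have hterm := (sum_eq_zero_iff_of_nonneg fun k _ =>
    mul_nonneg (hz.1 k) (sub_nonneg.2 (hr k))).1 hsum i (mem_univ i)
  exact (mul_eq_zero.1 hterm).resolve_right (sub_ne_zero.2 hi.ne')

end Simplex

section MatrixGame

variable {n m : ℕ} {A : Matrix (Fin n) (Fin m) ℝ} {x x' : Fin n → ℝ} {y y' : Fin m → ℝ}

lemma gamePayoff_eq_dotProduct_mulVec (A : Matrix (Fin n) (Fin m) ℝ) (x : Fin n → ℝ)
    (y : Fin m → ℝ) : gamePayoff A x y = x ⬝ᵥ (A *ᵥ y) := by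
  simp only [gamePayoff, dotProduct, mulVec, mul_sum, mul_assoc]

lemma gamePayoff_eq_vecMul_dotProduct (A : Matrix (Fin n) (Fin m) ℝ) (x : Fin n → ℝ)
    (y : Fin m → ℝ) : gamePayoff A x y = (x ᵥ* A) ⬝ᵥ y := by
  rw [gamePayoff_eq_dotProduct_mulVec, dotProduct_mulVec]

lemma gamePayoff_single_left (A : Matrix (Fin n) (Fin m) ℝ) (i : Fin n) (y : Fin m → ℝ) :
    gamePayoff A (Pi.single i 1) y = (A *ᵥ y) i := by
  rw [gamePayoff_eq_dotProduct_mulVec, single_one_dotProduct]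

lemma gamePayoff_single_right (A : Matrix (Fin n) (Fin m) ℝ) (x : Fin n → ℝ) (j : Fin m) :
    gamePayoff A x (Pi.single j 1) = (x ᵥ* A) j := by
  rw [gamePayoff_eq_vecMul_dotProduct, dotProduct_single_one]

lemma mulVec_apply_eq_sum_of_support {J : Finset (Fin m)} (hy : ∀ j ∉ J, y j = 0)
    (i : Fin n) : (A *ᵥ y) i = ∑ j ∈ J, A i j * y j :=
  (sum_subset (subset_univ J) fun j _ hj => by rw [hy j hj, mul_zero]).symm

lemma vecMul_apply_eq_sum_of_support {I : Finset (Fin n)} (hx : ∀ i ∉ I, x i = 0)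
    (j : Fin m) : (x ᵥ* A) j = ∑ i ∈ I, A i j * x i :=
  (sum_subset (subset_univ I) fun i _ hi => by rw [hx i hi, zero_mul]).symm.trans
    (sum_congr rfl fun _ _ => mul_comm _ _)

lemma isNash_of_forall_pure (hx : x ∈ stdSimplex ℝ (Fin n)) (hy : y ∈ stdSimplex ℝ (Fin m))
    (hrow : ∀ i, (A *ᵥ y) i ≤ gamePayoff A x y) (hcol : ∀ j, gamePayoff A x y ≤ (x ᵥ* A) j) :
    IsNash A x y := by
  refine ⟨hx, hy, fun z hz => ?_, fun w hw => ?_⟩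
  · rw [gamePayoff_eq_dotProduct_mulVec A z]
    exact dotProduct_le_of_mem_stdSimplex hz hrow
  · rw [ge_iff_le, gamePayoff_eq_vecMul_dotProduct A x w, dotProduct_comm, ← neg_le_neg_iff,
      ← dotProduct_neg]
    exact dotProduct_le_of_mem_stdSimplex hw fun j => neg_le_neg (hcol j)

lemma IsNash.mulVec_le (h : IsNash A x y) (i : Fin n) : (A *ᵥ y) i ≤ gamePayoff A x y :=
  gamePayoff_single_left A i y ▸ h.2.2.1 _ (single_mem_stdSimplex ℝ i)

lemma IsNash.le_vecMul (h : IsNash A x y) (j : Fin m) : gamePayoff A x y ≤ (x ᵥ* A) j :=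
  gamePayoff_single_right A x j ▸ h.2.2.2 _ (single_mem_stdSimplex ℝ j)

lemma IsNash.gamePayoff_eq (h : IsNash A x y) (h' : IsNash A x' y') :
    gamePayoff A x y' = gamePayoff A x' y' ∧ gamePayoff A x' y = gamePayoff A x' y' := by
  have h₁ := h'.2.2.2 y h.2.1
  have h₂ := h.2.2.1 x' h'.1
  have h₃ := h.2.2.2 y' h'.2.1
  have h₄ := h'.2.2.1 x h.1
  constructor <;> linarith

lemma IsNash.eq_zero_of_mulVec_lt (h : IsNash A x y) (h' : IsNash A x' y') {i : Fin n}
    (hi : (A *ᵥ y') i < gamePayoff A x' y') : x i = 0 :=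
  eq_zero_of_dotProduct_eq_of_lt h.1 h'.mulVec_le
    ((gamePayoff_eq_dotProduct_mulVec A x y').symm.trans (h.gamePayoff_eq h').1) hi

lemma IsNash.eq_zero_of_lt_vecMul (h : IsNash A x y) (h' : IsNash A x' y') {j : Fin m}
    (hj : gamePayoff A x' y' < (x' ᵥ* A) j) : y j = 0 := by
  refine eq_zero_of_dotProduct_eq_of_lt h.2.1 (r := -(x' ᵥ* A))
    (fun k => neg_le_neg (h'.le_vecMul k)) ?_ (neg_lt_neg hj)
  rw [dotProduct_neg, dotProduct_comm, ← gamePayoff_eq_vecMul_dotProduct, (h.gamePayoff_eq h').2]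

lemma IsNashOn.mulVec_le {I : Finset (Fin n)} {J : Finset (Fin m)} (h : IsNashOn A I J x y)
    {i : Fin n} (hi : i ∈ I) : (A *ᵥ y) i ≤ gamePayoff A x y := by
  refine gamePayoff_single_left A i y ▸ h.2.2.2.2.1 _ (single_mem_stdSimplex ℝ i) fun k hk => ?_
  exact Pi.single_eq_of_ne (ne_of_mem_of_not_mem hi hk).symm 1

lemma IsNashOn.le_vecMul {I : Finset (Fin n)} {J : Finset (Fin m)} (h : IsNashOn A I J x y)
    {j : Fin m} (hj : j ∈ J) : gamePayoff A x y ≤ (x ᵥ* A) j := by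
  refine gamePayoff_single_right A x j ▸ h.2.2.2.2.2 _ (single_mem_stdSimplex ℝ j) fun k hk => ?_
  exact Pi.single_eq_of_ne (ne_of_mem_of_not_mem hj hk).symm 1

lemma IsNash.isNashOn {I : Finset (Fin n)} {J : Finset (Fin m)} (h : IsNash A x y)
    (hx : ∀ i ∉ I, x i = 0) (hy : ∀ j ∉ J, y j = 0) : IsNashOn A I J x y :=
  ⟨h.1, h.2.1, hx, hy, fun z hz _ => h.2.2.1 z hz, fun w hw _ => h.2.2.2 w hw⟩

end MatrixGame

theorem stmt_11_general {n m : ℕ} (A : Matrix (Fin n) (Fin m) ℝ)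
    (I : Finset (Fin n)) (J : Finset (Fin m)) (x' : Fin n → ℝ) (y' : Fin m → ℝ)
    -- `(x', y')` is a fully supported Nash equilibrium of the subgame `B`
    (hNE : IsNashOn A I J x' y')
    -- and it is the unique equilibrium of the subgame
    (huniq : ∀ x y, IsNashOn A I J x y → x = x' ∧ y = y')
    -- every row outside `I` strictly loses against `y'`
    (hrow : I = Finset.univ ∨
      ∀ i ∉ I, ∑ j ∈ J, A i j * y' j < gamePayoff A x' y')
    -- every column outside `J` strictly loses against `x'`
    (hcol : J = Finset.univ ∨
      ∀ j ∉ J, ∑ i ∈ I, A i j * x' i > gamePayoff A x' y') :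
    IsNash A x' y' ∧ ∀ x y, IsNash A x y → x = x' ∧ y = y' := by
  have hrow' : ∀ i ∉ I, (A *ᵥ y') i < gamePayoff A x' y' := by
    rcases hrow with rfl | h
    · simp
    · exact fun i hi => (mulVec_apply_eq_sum_of_support hNE.2.2.2.1 i).trans_lt (h i hi)
  have hcol' : ∀ j ∉ J, gamePayoff A x' y' < (x' ᵥ* A) j := by
    rcases hcol with rfl | h
    · simp
    · exact fun j hj => (h j hj).trans_eq (vecMul_apply_eq_sum_of_support hNE.2.2.1 j).symm
  have hNash : IsNash A x' y' := isNash_of_forall_pure hNE.1 hNE.2.1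
    (fun i => if hi : i ∈ I then hNE.mulVec_le hi else (hrow' i hi).le)
    (fun j => if hj : j ∈ J then hNE.le_vecMul hj else (hcol' j hj).le)
  refine ⟨hNash, fun x y h => huniq x y (h.isNashOn ?_ ?_)⟩
  · exact fun i hi => h.eq_zero_of_mulVec_lt hNash (hrow' i hi)
  · exact fun j hj => h.eq_zero_of_lt_vecMul hNash (hcol' j hj)

theorem stmt_11 {n m : ℕ} (A : Matrix (Fin n) (Fin m) ℝ)
    (I : Finset (Fin n)) (J : Finset (Fin m)) (x' : Fin n → ℝ) (y' : Fin m → ℝ)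
    -- `(x', y')` is a fully supported Nash equilibrium of the subgame `B`
    (hNE : IsNashOn A I J x' y')
    (hxpos : ∀ i ∈ I, 0 < x' i) (hypos : ∀ j ∈ J, 0 < y' j)
    -- and it is the unique equilibrium of the subgame
    (huniq : ∀ x y, IsNashOn A I J x y → x = x' ∧ y = y')
    -- every row outside `I` strictly loses against `y'`
    (hrow : I = Finset.univ ∨
      ∀ i ∉ I, ∑ j ∈ J, A i j * y' j < gamePayoff A x' y')
    -- every column outside `J` strictly loses against `x'`
    (hcol : J = Finset.univ ∨
      ∀ j ∉ J, ∑ i ∈ I, A i j * x' i > gamePayoff A x' y') :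
    IsNash A x' y' ∧ ∀ x y, IsNash A x y → x = x' ∧ y = y' :=
  stmt_11_general A I J x' y' hNE huniq hrow hcol
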